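/- arXiv:1904.01923 — 6 statements merged into one kernel-verified Lean document; each statement's English description precedes it below -/
import Mathlib

section
/- Let X = ℓ^p (1 ≤ p < ∞) or c₀ over ℂ, endowed with coordinatewise multiplication, and let λ ∈ ℂ with |λ| > 1. If x ∈ X is frequently hypercyclic for the operator λB (where B is the backward shift), then there exists a natural number M such that for every m ≥ M, the coordinatewise power x^m is not hypercyclic for λB. -/
open Filter
open scoped ZeroAtInfty ENNReal

/-- Lower density of a set of natural numbers. -/
noncomputable def lowerDensity (A : Set ℕ) : ℝ :=
  Filter.atTop.liminf fun N : ℕ => ((A ∩ Set.Iic N).ncard : ℝ) / (N + 1)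

/-- A vector is hypercyclic for a map if its orbit is dense. -/
def Hypercyclic {X : Type*} [TopologicalSpace X] (T : X → X) (x : X) : Prop :=
  Dense (Set.range fun n : ℕ => T^[n] x)

/-- A vector is frequently hypercyclic if it visits every nonempty open set along a set
of positive lower density. -/
def FreqHypercyclic {X : Type*} [TopologicalSpace X] (T : X → X) (x : X) : Prop :=
  ∀ U : Set X, IsOpen U → U.Nonempty → 0 < lowerDensity {n : ℕ | T^[n] x ∈ U}

theorem key_lemma {X : Type*} [NormedAddCommGroup X] (coord : X → ℕ → ℂ)
    (hcoord : ∀ z i, ‖coord z i‖ ≤ ‖z‖)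
    (hsub : ∀ z w i, coord (z - w) i = coord z i - coord w i)
    {lam : ℂ} (hlam : 1 < ‖lam‖)
    (T : X → X) (hT : ∀ z i, coord (T z) i = lam * coord z (i + 1))
    (x : X) (hx : FreqHypercyclic T x)
    (hw : ∀ k : ℕ, ∃ w : X, coord w k = 2) :
    ∃ M : ℕ, ∀ m : ℕ, M ≤ m → ∀ xm : X, (∀ i, coord xm i = coord x i ^ m) →
      ¬ Hypercyclic T xm := by
  set b := ‖lam‖ with hbdef
  have hb0 : (0:ℝ) < b := lt_trans one_pos hlam
  have hiter : ∀ (n : ℕ) (z : X) (i : ℕ), coord (T^[n] z) i = lam ^ n * coord z (i + n) := by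
    intro n
    induction n with
    | zero => intro z i; simp
    | succ n ih =>
      intro z i
      rw [Function.iterate_succ_apply, ih (T z) i, hT]
      have h : i + n + 1 = i + (n + 1) := by omega
      rw [h, pow_succ]
      ring
  set D : Set ℕ := {n : ℕ | T^[n] x ∈ Metric.ball (0:X) 1} with hD
  have hδ : 0 < lowerDensity D :=
    hx _ Metric.isOpen_ball ⟨0, Metric.mem_ball_self one_pos⟩
  set δ := lowerDensity D with hδdef
  have hbound : IsBoundedUnder (· ≥ ·) atTop
      (fun N : ℕ => ((D ∩ Set.Iic N).ncard : ℝ) / (N + 1)) := by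
    refine isBoundedUnder_of ⟨0, fun N => ?_⟩
    positivity
  have hev : ∀ᶠ N in atTop, δ / 2 < ((D ∩ Set.Iic N).ncard : ℝ) / (N + 1) :=
    eventually_lt_of_lt_liminf (show δ/2 < lowerDensity D by linarith) hbound
  obtain ⟨N₀, hN₀⟩ := eventually_atTop.mp hev
  set N₁ : ℕ := max N₀ (max (Nat.ceil (4 / δ) + 1) 1) with hN₁
  have hdecay : ∀ j : ℕ, N₁ ≤ j → ‖coord x j‖ ≤ b ^ (-(δ/4) * j) := by
    intro j hj
    have hj4 : (4:ℝ) / δ ≤ j := by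
      have h1 : (4:ℝ)/δ ≤ Nat.ceil ((4:ℝ)/δ) := Nat.le_ceil _
      have h2 : (Nat.ceil ((4:ℝ)/δ) : ℝ) ≤ j := by
        exact_mod_cast le_trans (le_trans (Nat.le_succ _) (le_trans (le_max_left _ _)
          (le_max_right _ _))) hj
      linarith
    have hδj : (4:ℝ) ≤ δ * j := by
      rw [div_le_iff₀ hδ] at hj4; linarith
    have hcnt : δ / 2 * (j + 1) < ((D ∩ Set.Iic j).ncard : ℝ) := by
      have h := hN₀ j (le_trans (le_max_left _ _) hj)
      have hpos : (0:ℝ) < (j:ℝ) + 1 := by positivity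
      rw [lt_div_iff₀ hpos] at h
      linarith
    have hex : ∃ n ∈ D, n ≤ j ∧ δ/4 * j ≤ (n:ℝ) := by
      by_contra h
      push_neg at h
      have hsub2 : D ∩ Set.Iic j ⊆ Set.Iio (Nat.ceil (δ/4 * (j:ℝ))) := by
        rintro n ⟨hn1, hn2⟩
        exact Set.mem_Iio.mpr (Nat.lt_ceil.mpr (h n hn1 hn2))
      have hcard := Set.ncard_le_ncard hsub2 (Set.finite_Iio _)
      have hIio : (Set.Iio (Nat.ceil (δ/4 * (j:ℝ)))).ncard = Nat.ceil (δ/4 * (j:ℝ)) := by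
        simp [Set.ncard_eq_toFinset_card', Set.toFinset_Iio]
      have hceil : (Nat.ceil (δ/4 * (j:ℝ)) : ℝ) < δ/4 * j + 1 :=
        Nat.ceil_lt_add_one (by positivity)
      have hle : ((D ∩ Set.Iic j).ncard : ℝ) ≤ (Nat.ceil (δ/4 * (j:ℝ)) : ℝ) := by
        exact_mod_cast hIio ▸ hcard
      nlinarith
    obtain ⟨n, hnD, hnj, hn4⟩ := hex
    have hball : ‖T^[n] x‖ < 1 := by
      have h' := hnD
      rw [hD] at h'
      rw [Set.mem_setOf_eq, Metric.mem_ball, dist_zero_right] at h'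
      exact h'
    have hc := hcoord (T^[n] x) (j - n)
    rw [hiter n x (j - n)] at hc
    have hjn : j - n + n = j := Nat.sub_add_cancel hnj
    rw [hjn, norm_mul, norm_pow] at hc
    have hbn : (0:ℝ) < b ^ n := pow_pos hb0 n
    have hxj : ‖coord x j‖ ≤ (b ^ n)⁻¹ := by
      rw [← one_div, le_div_iff₀ hbn]
      nlinarith [lt_of_le_of_lt hc hball]
    have hconv : ((b:ℝ) ^ n)⁻¹ = b ^ (-(n:ℝ)) := by
      rw [Real.rpow_neg hb0.le, Real.rpow_natCast]
    have hmono : b ^ (-(n:ℝ)) ≤ b ^ (-(δ/4) * j) := by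
      apply (Real.rpow_le_rpow_left_iff hlam).mpr
      linarith
    calc ‖coord x j‖ ≤ (b ^ n)⁻¹ := hxj
      _ = b ^ (-(n:ℝ)) := hconv
      _ ≤ b ^ (-(δ/4) * j) := hmono
  refine ⟨Nat.ceil (4/δ) + 1, fun m hm xm hxm hHC => ?_⟩
  set k : ℕ := N₁ with hk
  obtain ⟨w, hwk⟩ := hw k
  obtain ⟨z, hz1, hz2⟩ := (Metric.dense_iff.mp hHC) w 1 one_pos
  obtain ⟨n, rfl⟩ := hz2
  simp only [Metric.mem_ball, dist_eq_norm] at hz1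
  have hck := hcoord (T^[n] xm - w) k
  rw [hsub, hwk] at hck
  have hck1 : ‖coord (T^[n] xm) k - 2‖ < 1 := lt_of_le_of_lt hck hz1
  have hbig : 1 < ‖coord (T^[n] xm) k‖ := by
    have h4 := abs_norm_sub_norm_le (coord (T^[n] xm) k) (2:ℂ)
    have h2n : ‖(2:ℂ)‖ = 2 := by norm_num
    rw [h2n] at h4
    have h5 : |‖coord (T^[n] xm) k‖ - 2| < 1 := lt_of_le_of_lt h4 hck1
    linarith [(abs_lt.mp h5).1]
  rw [hiter n xm k, hxm, norm_mul, norm_pow, norm_pow] at hbig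
  set j : ℕ := k + n with hj
  have hjN : N₁ ≤ j := Nat.le_add_right _ _
  have hd := hdecay j hjN
  have hnj : n ≤ j := Nat.le_add_left _ _
  have hbn : (0:ℝ) < b ^ n := pow_pos hb0 n
  have h1 : (b ^ n)⁻¹ < ‖coord x j‖ ^ m := by
    rw [← one_div, div_lt_iff₀ hbn]
    nlinarith [hbig]
  have h2 : ((b:ℝ) ^ j)⁻¹ ≤ (b ^ n)⁻¹ := by
    gcongr
    exact hlam.le
  have h3 : ‖coord x j‖ ^ m ≤ b ^ ((-(δ/4) * j) * m) := by
    calc ‖coord x j‖ ^ m ≤ (b ^ (-(δ/4) * (j:ℝ))) ^ m :=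
          pow_le_pow_left₀ (norm_nonneg _) hd m
      _ = b ^ ((-(δ/4) * j) * m) := by
          rw [← Real.rpow_natCast (b ^ (-(δ/4) * (j:ℝ))) m, ← Real.rpow_mul hb0.le]
  have hconvj : ((b:ℝ) ^ j)⁻¹ = b ^ (-(j:ℝ)) := by
    rw [Real.rpow_neg hb0.le, Real.rpow_natCast]
  have hfinal : b ^ (-(j:ℝ)) < b ^ ((-(δ/4) * j) * m) := by
    calc b ^ (-(j:ℝ)) = ((b:ℝ) ^ j)⁻¹ := hconvj.symm
      _ ≤ (b ^ n)⁻¹ := h2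
      _ < ‖coord x j‖ ^ m := h1
      _ ≤ b ^ ((-(δ/4) * j) * m) := h3
  have hexp : -(j:ℝ) < (-(δ/4) * j) * m := (Real.rpow_lt_rpow_left_iff hlam).mp hfinal
  have hjpos : (1:ℝ) ≤ (j:ℝ) := by
    have h : 1 ≤ j := le_trans (le_trans (le_max_right _ _) (le_max_right _ _)) hjN
    exact_mod_cast h
  have hm4 : 4 < δ * m := by
    have h1' : (4:ℝ)/δ < Nat.ceil ((4:ℝ)/δ) + 1 := lt_of_le_of_lt (Nat.le_ceil _) (by linarith)
    have h2' : ((Nat.ceil ((4:ℝ)/δ) + 1 : ℕ) : ℝ) ≤ m := by exact_mod_cast hm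
    push_cast at h2'
    rw [div_lt_iff₀ hδ] at h1'
    nlinarith
  nlinarith [hexp, hjpos, hm4, hδ.le, mul_lt_mul_of_pos_right hm4 (lt_of_lt_of_le one_pos hjpos)]

/-- On `X = ℓ^p` (`1 ≤ p < ∞`, first conjunct) or `X = c₀` (second
conjunct) with coordinatewise multiplication, if `x` is frequently hypercyclic for the
Rolewicz operator `λB` (`|λ| > 1`), then there is `M` such that for every `m ≥ M` the
coordinatewise power `x^m` is not hypercyclic for `λB`. The operator and the powers
are specified coordinatewise. -/
theorem stmt2 (p : ℝ≥0∞) [Fact (1 ≤ p)] (hp : p ≠ ⊤) (lam : ℂ) (hlam : 1 < ‖lam‖) :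
    (∀ T : lp (fun _ : ℕ => ℂ) p → lp (fun _ : ℕ => ℂ) p,
      (∀ (x : lp (fun _ : ℕ => ℂ) p) (i : ℕ), T x i = lam * x (i + 1)) →
      ∀ x : lp (fun _ : ℕ => ℂ) p, FreqHypercyclic T x →
        ∃ M : ℕ, ∀ m : ℕ, M ≤ m → ∀ xm : lp (fun _ : ℕ => ℂ) p,
          (∀ i : ℕ, xm i = x i ^ m) → ¬ Hypercyclic T xm) ∧
    (∀ T : C₀(ℕ, ℂ) → C₀(ℕ, ℂ),
      (∀ (x : C₀(ℕ, ℂ)) (i : ℕ), T x i = lam * x (i + 1)) →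
      ∀ x : C₀(ℕ, ℂ), FreqHypercyclic T x →
        ∃ M : ℕ, ∀ m : ℕ, M ≤ m → ∀ xm : C₀(ℕ, ℂ),
          (∀ i : ℕ, xm i = x i ^ m) → ¬ Hypercyclic T xm) := by
  have hp0 : p ≠ 0 := by
    have h1 : (1:ℝ≥0∞) ≤ p := Fact.out
    exact (zero_lt_one.trans_le h1).ne'
  constructor
  · intro T hT x hx
    exact key_lemma (fun z i => z i)
      (fun z i => lp.norm_apply_le_norm hp0 z i)
      (fun z w i => by simp)
      hlam T (fun z i => hT z i) x hx
      (fun k => ⟨lp.single p k (2:ℂ), lp.single_apply_self p k 2⟩)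
  · intro T hT x hx
    refine key_lemma (fun z i => z i) ?_ (fun z w i => by simp) hlam T
      (fun z i => hT z i) x hx ?_
    · intro z i
      calc ‖z i‖ ≤ ‖z.toBCF‖ := z.toBCF.norm_coe_le_norm i
        _ = ‖z‖ := ZeroAtInftyContinuousMap.norm_toBCF_eq_norm
    · intro k
      refine ⟨⟨⟨fun n => if n = k then (2:ℂ) else 0, continuous_of_discreteTopology⟩, ?_⟩, ?_⟩
      · have hmem : ({k} : Set ℕ)ᶜ ∈ cocompact ℕ := isCompact_singleton.compl_mem_cocompact
        have heq : (fun n : ℕ => if n = k then (2:ℂ) else 0) =ᶠ[cocompact ℕ]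
            (fun _ => (0:ℂ)) := by
          filter_upwards [hmem] with n hn
          simp only [Set.mem_compl_iff, Set.mem_singleton_iff] at hn
          simp [hn]
        exact tendsto_const_nhds.congr' heq.symm
      · simp
end

section
/- Let X = ℓ^p (1 ≤ p < ∞) or c₀ with coordinatewise multiplication, and λ ∈ ℂ with |λ| > 1. Then the Rolewicz operator λB admits no frequently hypercyclic algebra: there is no nonzero subalgebra A of X with A \ {0} ⊆ FHC(λB). -/
open Filter
open scoped ZeroAtInfty ENNReal

/-- A set of positive lower density is infinite. -/
lemma infinite_of_lowerDensity_pos {A : Set ℕ} (hA : 0 < lowerDensity A) : A.Infinite := by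
  by_contra hif
  rw [Set.not_infinite] at hif
  have hfin := hif
  have h0 : Tendsto (fun N : ℕ => ((A ∩ Set.Iic N).ncard : ℝ) / (N + 1)) atTop (nhds 0) := by
    apply squeeze_zero (fun N => by positivity) (g := fun N : ℕ => (A.ncard : ℝ) / (N + 1))
    · intro N
      have h : ((A ∩ Set.Iic N).ncard : ℝ) ≤ (A.ncard : ℝ) := by
        exact_mod_cast Set.ncard_le_ncard Set.inter_subset_left hfin
      gcongr
    · exact tendsto_const_nhds.div_atTop
        (tendsto_atTop_add_const_right _ 1 tendsto_natCast_atTop_atTop)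
  have := h0.liminf_eq
  rw [lowerDensity] at hA
  rw [this] at hA
  exact lt_irrefl _ hA

lemma ncard_Iic_nat (a : ℕ) : (Set.Iic a).ncard = a + 1 := by
  rw [← Finset.coe_Iic, Set.ncard_coe_finset, Nat.card_Iic]

/-- Counting estimate: if every element `n` of `A` below an element `m` of `B` satisfies
`n * k < m`, and `B` is infinite, then the lower density of `A` is at most `3 / k`. -/
lemma lowerDensity_le_of_gaps {A B : Set ℕ} {k : ℕ} (hk : 1 ≤ k) (hB : B.Infinite)
    (h : ∀ m ∈ B, ∀ n ∈ A, n < m → n * k < m) :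
    lowerDensity A ≤ 3 / k := by
  apply liminf_le_of_frequently_le _
    (isBoundedUnder_of ⟨0, fun N => by positivity⟩)
  have hfreq : ∃ᶠ m in atTop, m ∈ B := Nat.frequently_atTop_iff_infinite.2 hB
  refine (hfreq.and_eventually (eventually_ge_atTop k)).mono ?_
  rintro m ⟨hmB, hmk⟩
  have hsub : A ∩ Set.Iic m ⊆ Set.Iic (m / k) ∪ {m} := by
    rintro n ⟨hnA, hnm⟩
    rcases eq_or_lt_of_le (Set.mem_Iic.1 hnm) with rfl | hlt
    · exact Or.inr rfl
    · exact Or.inl (Set.mem_Iic.2 ((Nat.le_div_iff_mul_le (by omega)).2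
        (le_of_lt (h m hmB n hnA hlt))))
  have hcard : (A ∩ Set.Iic m).ncard ≤ m / k + 2 := by
    calc (A ∩ Set.Iic m).ncard ≤ (Set.Iic (m / k) ∪ {m} : Set ℕ).ncard :=
          Set.ncard_le_ncard hsub ((Set.finite_Iic _).union (Set.finite_singleton m))
      _ ≤ (Set.Iic (m / k)).ncard + ({m} : Set ℕ).ncard := Set.ncard_union_le _ _
      _ = m / k + 2 := by rw [Set.ncard_singleton, ncard_Iic_nat]
  have hk0 : (0 : ℝ) < k := by exact_mod_cast hk
  have hm1 : (0 : ℝ) < (m : ℝ) + 1 := by positivity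
  have h1 : ((A ∩ Set.Iic m).ncard : ℝ) ≤ (m : ℝ) / k + 2 := by
    calc ((A ∩ Set.Iic m).ncard : ℝ) ≤ ((m / k + 2 : ℕ) : ℝ) := by exact_mod_cast hcard
      _ = ((m / k : ℕ) : ℝ) + 2 := by push_cast; ring
      _ ≤ (m : ℝ) / k + 2 := by linarith [Nat.cast_div_le (α := ℝ) (m := m) (n := k)]
  have hkm : (k : ℝ) ≤ m := by exact_mod_cast hmk
  rw [div_le_div_iff₀ hm1 hk0]
  have hdm : ((m : ℝ) / k) * k = m := div_mul_cancel₀ _ (ne_of_gt hk0)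
  nlinarith [mul_le_mul_of_nonneg_right h1 (le_of_lt hk0)]

/-- The key sequence-level contradiction. -/
lemma key_contradiction (lam : ℂ) (hlam : 1 < ‖lam‖) (x : ℕ → ℂ) (A : Set ℕ) (B : ℕ → Set ℕ)
    (hA0 : 0 < lowerDensity A)
    (hAprop : ∀ n ∈ A, ∀ m, n < m → ‖lam ^ n * x m‖ < 1 / 2)
    (hB0 : ∀ k, 1 ≤ k → 0 < lowerDensity (B k))
    (hBprop : ∀ k, 1 ≤ k → ∀ m ∈ B k, ‖lam ^ m * x m ^ k - 1‖ < 1 / 2) : False := by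
  obtain ⟨k, hk⟩ := exists_nat_gt (3 / lowerDensity A)
  have hpos : 0 < 3 / lowerDensity A := by positivity
  have hk1 : 1 ≤ k := by
    rcases Nat.eq_zero_or_pos k with rfl | h
    · simp only [Nat.cast_zero] at hk; linarith
    · exact h
  have hk0 : (0 : ℝ) < k := by exact_mod_cast hk1
  have h3k : 3 / (k : ℝ) < lowerDensity A := by
    rw [div_lt_iff₀ hA0] at hk
    rw [div_lt_iff₀ hk0]
    nlinarith
  have hBinf : (B k).Infinite := infinite_of_lowerDensity_pos (hB0 k hk1)
  have hcond : ∀ m ∈ B k, ∀ n ∈ A, n < m → n * k < m := by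
    intro m hm n hn hnm
    by_contra hle
    push_neg at hle
    have hb := hBprop k hk1 m hm
    have h2 : ‖(1 : ℂ)‖ - ‖lam ^ m * x m ^ k - 1‖ ≤ ‖lam ^ m * x m ^ k‖ := by
      have := norm_sub_norm_le (1 : ℂ) (lam ^ m * x m ^ k)
      rw [norm_sub_rev] at this
      linarith
    rw [norm_one] at h2
    have h1 : 1 / 2 < ‖lam‖ ^ m * ‖x m‖ ^ k := by
      have : ‖lam ^ m * x m ^ k‖ = ‖lam‖ ^ m * ‖x m‖ ^ k := by
        rw [norm_mul, norm_pow, norm_pow]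
      linarith
    have ha := hAprop n hn m hnm
    rw [norm_mul, norm_pow] at ha
    have hx0 : (0 : ℝ) ≤ ‖x m‖ := norm_nonneg _
    have hl1 : (1 : ℝ) ≤ ‖lam‖ := hlam.le
    have hmono : ‖lam‖ ^ m ≤ ‖lam‖ ^ (n * k) := pow_le_pow_right₀ hl1 hle
    have hchain : ‖lam‖ ^ m * ‖x m‖ ^ k ≤ (‖lam‖ ^ n * ‖x m‖) ^ k := by
      rw [mul_pow, ← pow_mul]
      exact mul_le_mul_of_nonneg_right hmono (pow_nonneg hx0 k)
    have hlt : (‖lam‖ ^ n * ‖x m‖) ^ k < (1 / 2 : ℝ) ^ k :=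
      pow_lt_pow_left₀ ha (by positivity) (by omega)
    have hhalf : (1 / 2 : ℝ) ^ k ≤ 1 / 2 := by
      calc (1 / 2 : ℝ) ^ k ≤ (1 / 2 : ℝ) ^ 1 :=
            pow_le_pow_of_le_one (by norm_num) (by norm_num) hk1
        _ = 1 / 2 := pow_one _
    linarith
  exact absurd (lowerDensity_le_of_gaps hk1 hBinf hcond) (not_le.2 h3k)

/-- The abstract space-level argument, applied to both `ℓ^p` and `c₀`. -/
lemma space_key {X : Type*} [NormedAddCommGroup X] (lam : ℂ) (hlam : 1 < ‖lam‖)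
    (ev : X → ℕ → ℂ)
    (hsub : ∀ u v : X, ∀ i, ev (u - v) i = ev u i - ev v i)
    (hnorm : ∀ u : X, ∀ i, ‖ev u i‖ ≤ ‖u‖)
    (T : X → X) (hT : ∀ u i, ev (T u) i = lam * ev u (i + 1))
    (e0 : X) (he00 : ev e0 0 = 1) (he0 : ∀ i : ℕ, i ≠ 0 → ev e0 i = 0)
    (x : X) (hx : FreqHypercyclic T x)
    (xk : ℕ → X) (hxk : ∀ k, 1 ≤ k → ∀ i, ev (xk k) i = ev x i ^ k)
    (hxkF : ∀ k, 1 ≤ k → FreqHypercyclic T (xk k)) : False := by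
  have hiter : ∀ (n : ℕ) (u : X) (i : ℕ), ev (T^[n] u) i = lam ^ n * ev u (n + i) := by
    intro n
    induction n with
    | zero => intro u i; simp
    | succ n ih =>
      intro u i
      rw [Function.iterate_succ_apply, ih, hT, show n + i + 1 = n + 1 + i by omega]
      ring
  set U := Metric.ball e0 (1 / 2) with hU
  have hUopen : IsOpen U := Metric.isOpen_ball
  have hUne : U.Nonempty := ⟨e0, Metric.mem_ball_self (by norm_num)⟩
  have hdist : ∀ (y : X) (n : ℕ), T^[n] y ∈ U →
      ∀ i, ‖lam ^ n * ev y (n + i) - ev e0 i‖ < 1 / 2 := by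
    intro y n hn i
    have h1 : ‖T^[n] y - e0‖ < 1 / 2 := by rwa [hU, Metric.mem_ball, dist_eq_norm] at hn
    calc ‖lam ^ n * ev y (n + i) - ev e0 i‖ = ‖ev (T^[n] y - e0) i‖ := by rw [hsub, hiter]
      _ ≤ ‖T^[n] y - e0‖ := hnorm _ _
      _ < 1 / 2 := h1
  apply key_contradiction lam hlam (ev x) {n | T^[n] x ∈ U} (fun k => {m | T^[m] (xk k) ∈ U})
  · exact hx U hUopen hUne
  · intro n hn m hnm
    have := hdist x n hn (m - n)
    rwa [he0 (m - n) (by omega), sub_zero, show n + (m - n) = m by omega] at this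
  · intro k hk
    exact hxkF k hk U hUopen hUne
  · intro k hk m hm
    have := hdist (xk k) m hm 0
    rwa [he00, hxk k hk, Nat.add_zero] at this

/-- Coordinatewise products of `ℓ^p` elements are in `ℓ^p`. -/
lemma memℓp_coord_mul {p : ℝ≥0∞} [Fact (1 ≤ p)] (hp : 0 < p.toReal)
    (x y : lp (fun _ : ℕ => ℂ) p) : Memℓp (fun i => x i * y i) p := by
  have hpne : p ≠ 0 := by
    intro h; rw [h] at hp; simp at hp
  apply memℓp_gen
  have hsum := (lp.memℓp y).summable hp
  refine Summable.of_nonneg_of_le (fun i => Real.rpow_nonneg (norm_nonneg _) _)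
    (fun i => ?_) (hsum.mul_left (‖x‖ ^ p.toReal))
  calc ‖x i * y i‖ ^ p.toReal = (‖x i‖ * ‖y i‖) ^ p.toReal := by rw [norm_mul]
    _ ≤ (‖x‖ * ‖y i‖) ^ p.toReal := by
        apply Real.rpow_le_rpow (by positivity) ?_ hp.le
        exact mul_le_mul_of_nonneg_right (lp.norm_apply_le_norm hpne x i) (norm_nonneg _)
    _ = ‖x‖ ^ p.toReal * ‖y i‖ ^ p.toReal := Real.mul_rpow (norm_nonneg x) (norm_nonneg _)

/-- The indicator of `{0}` as an element of `c₀`. -/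
noncomputable def e0c : C₀(ℕ, ℂ) :=
  ⟨⟨fun n => if n = 0 then 1 else 0, continuous_of_discreteTopology⟩, by
    have hten : Tendsto (fun n : ℕ => if n = 0 then (1 : ℂ) else 0) atTop (nhds 0) := by
      apply Tendsto.congr' _ tendsto_const_nhds
      filter_upwards [eventually_ge_atTop 1] with n hn
      show (0 : ℂ) = if n = 0 then 1 else 0
      rw [if_neg (by omega)]
    simpa [cocompact_eq_atTop] using hten⟩

lemma e0c_apply_zero : e0c 0 = 1 := rfl

lemma e0c_apply_ne : ∀ i : ℕ, i ≠ 0 → e0c i = 0 := fun i hi => by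
  show (if i = 0 then (1 : ℂ) else 0) = 0
  rw [if_neg hi]

set_option maxHeartbeats 1000000 in
/-- On `X = ℓ^p` (`1 ≤ p < ∞`) or `X = c₀` with coordinatewise
multiplication, the Rolewicz operator `λB` (`|λ| > 1`) has no frequently hypercyclic
algebra: every subalgebra all of whose nonzero elements are frequently hypercyclic
is trivial. For `ℓ^p` a subalgebra is described as a set containing `0`, closed under
addition, scalar multiplication and the coordinatewise product; for `c₀` we use
`NonUnitalSubalgebra` (the product of `c₀` being the coordinatewise one). -/
theorem stmt3 (p : ℝ≥0∞) [Fact (1 ≤ p)] (hp : p ≠ ⊤) (lam : ℂ) (hlam : 1 < ‖lam‖) :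
    (∀ T : lp (fun _ : ℕ => ℂ) p → lp (fun _ : ℕ => ℂ) p,
      (∀ (x : lp (fun _ : ℕ => ℂ) p) (i : ℕ), T x i = lam * x (i + 1)) →
      ∀ S : Set (lp (fun _ : ℕ => ℂ) p),
        (0 : lp (fun _ : ℕ => ℂ) p) ∈ S →
        (∀ a ∈ S, ∀ b ∈ S, a + b ∈ S) →
        (∀ (c : ℂ), ∀ a ∈ S, c • a ∈ S) →
        (∀ a ∈ S, ∀ b ∈ S, ∀ ab : lp (fun _ : ℕ => ℂ) p,
          (∀ i : ℕ, ab i = a i * b i) → ab ∈ S) →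
        S \ {0} ⊆ {x | FreqHypercyclic T x} → S = {0}) ∧
    (∀ T : C₀(ℕ, ℂ) → C₀(ℕ, ℂ),
      (∀ (x : C₀(ℕ, ℂ)) (i : ℕ), T x i = lam * x (i + 1)) →
      ∀ S : NonUnitalSubalgebra ℂ C₀(ℕ, ℂ),
        (S : Set C₀(ℕ, ℂ)) \ {0} ⊆ {x | FreqHypercyclic T x} → S = ⊥) := by
  have hp1 : 1 ≤ p := Fact.out
  have hpne : p ≠ 0 := (lt_of_lt_of_le zero_lt_one hp1).ne'
  have hpt : 0 < p.toReal := ENNReal.toReal_pos hpne hp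
  constructor
  · -- ℓ^p case
    intro T hT S h0 _hadd _hsmul hmulS hFHC
    refine Set.eq_singleton_iff_unique_mem.mpr ⟨h0, fun x hxS => ?_⟩
    by_contra hxne
    obtain ⟨i0, hi0⟩ : ∃ i, x i ≠ 0 := by
      by_contra hc
      push_neg at hc
      exact hxne (lp.ext (funext fun i => by rw [hc i]; simp [lp.coeFn_zero]))
    have hpow : ∀ k : ℕ, ∃ y : lp (fun _ : ℕ => ℂ) p, y ∈ S ∧ ∀ i, y i = x i ^ (k + 1) := by
      intro k
      induction k with
      | zero => exact ⟨x, hxS, fun i => (pow_one _).symm⟩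
      | succ k ih =>
        obtain ⟨y, hyS, hy⟩ := ih
        refine ⟨⟨fun i => x i * y i, memℓp_coord_mul hpt x y⟩,
          hmulS x hxS y hyS _ (fun i => rfl), fun i => ?_⟩
        show x i * y i = _
        rw [hy]
        ring
    choose y hyS hyc using hpow
    have hy_ne : ∀ k : ℕ, y k ≠ 0 := by
      intro k hk0
      have : (y k) i0 = 0 := by rw [hk0]; simp [lp.coeFn_zero]
      rw [hyc k i0] at this
      exact pow_ne_zero _ hi0 this
    exact space_key lam hlam (fun u i => u i)
      (fun u v i => by show (↑(u - v) : ℕ → ℂ) i = _; rw [lp.coeFn_sub, Pi.sub_apply])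
      (fun u i => lp.norm_apply_le_norm hpne u i)
      T hT (lp.single p 0 1) (lp.single_apply_self p 0 1)
      (fun i hi => lp.single_apply_ne p 0 1 hi)
      x (hFHC ⟨hxS, hxne⟩)
      (fun k => y (k - 1))
      (fun k hk i => by
        show (↑(y (k - 1)) : ℕ → ℂ) i = (↑x : ℕ → ℂ) i ^ k
        rw [hyc (k - 1) i, show k - 1 + 1 = k by omega])
      (fun k hk => hFHC ⟨hyS (k - 1), hy_ne (k - 1)⟩)
  · -- c₀ case
    intro T hT S hFHC
    ext z
    rw [NonUnitalAlgebra.mem_bot]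
    constructor
    · intro hzS
      by_contra hzne
      obtain ⟨i0, hi0⟩ : ∃ i, z i ≠ 0 := by
        by_contra hc
        push_neg at hc
        exact hzne (ZeroAtInftyContinuousMap.ext fun i => by rw [hc i]; rfl)
      have hpow : ∀ k : ℕ, ∃ y : C₀(ℕ, ℂ), y ∈ S ∧ ∀ i, y i = z i ^ (k + 1) := by
        intro k
        induction k with
        | zero => exact ⟨z, hzS, fun i => (pow_one _).symm⟩
        | succ k ih =>
          obtain ⟨y, hyS, hy⟩ := ih
          refine ⟨z * y, mul_mem hzS hyS, fun i => ?_⟩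
          have : (z * y) i = z i * y i := by
            rw [ZeroAtInftyContinuousMap.coe_mul]; rfl
          rw [this, hy]
          ring
      choose y hyS hyc using hpow
      have hy_ne : ∀ k : ℕ, y k ≠ 0 := by
        intro k hk0
        have : (y k) i0 = 0 := by rw [hk0]; rfl
        rw [hyc k i0] at this
        exact pow_ne_zero _ hi0 this
      have hsub' : ∀ u v : C₀(ℕ, ℂ), ∀ i, (u - v) i = u i - v i := fun u v i =>
        ZeroAtInftyContinuousMap.sub_apply i u v
      have hnorm' : ∀ u : C₀(ℕ, ℂ), ∀ i, ‖u i‖ ≤ ‖u‖ := fun u i =>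
        BoundedContinuousFunction.norm_coe_le_norm u.toBCF i
      exact space_key lam hlam (fun u i => u i) hsub' hnorm'
        T hT e0c e0c_apply_zero e0c_apply_ne
        z (hFHC ⟨hzS, hzne⟩)
        (fun k => y (k - 1))
        (fun k hk i => by
          show y (k - 1) i = z i ^ k
          rw [hyc (k - 1) i, show k - 1 + 1 = k by omega])
        (fun k hk => hFHC ⟨hyS (k - 1), hy_ne (k - 1)⟩)
    · rintro rfl
      exact zero_mem S
end

section
/- Let X = ℓ^p (1 ≤ p < ∞) or c₀ with coordinatewise multiplication, and λ ∈ ℂ with |λ| > 1. If x ∈ X is supercyclic for λB, then for every m ∈ ℕ the coordinatewise power x^m is also supercyclic for λB. -/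
open Filter
open scoped ZeroAtInfty ENNReal

/-- A vector is supercyclic for a map if the scalar multiples of its orbit are dense. -/
def Supercyclic {X : Type*} [TopologicalSpace X] [SMul ℂ X] (T : X → X) (x : X) : Prop :=
  Dense {y : X | ∃ (a : ℂ) (n : ℕ), y = a • T^[n] x}

/-!
On these sequence spaces, `(λB)ⁿ (xᵐ) = λ^{(m-1)n} ((λB)ⁿ x)ᵐ`, so the projective orbit of `xᵐ`
contains the coordinatewise `m`-th powers of the projective orbit of `x`. Since `u ↦ uᵐ` is
continuous (locally Lipschitz, as `|aᵐ - bᵐ| ≤ m M^{m-1} |a - b|` and the norm is solid), the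
`m`-th powers of a dense set are dense in the set of all `m`-th powers, and that set is dense
because every finitely supported sequence has an `m`-th root.
-/

open scoped Topology

lemma norm_pow_sub_pow_le {M : ℝ} {u v : ℂ} (hu : ‖u‖ ≤ M) (hv : ‖v‖ ≤ M) (m : ℕ) :
    ‖u ^ m - v ^ m‖ ≤ m * M ^ (m - 1) * ‖u - v‖ := by
  have hM : 0 ≤ M := (norm_nonneg u).trans hu
  rw [← geom_sum₂_mul u v m, norm_mul]
  gcongr
  calc ‖∑ i ∈ Finset.range m, u ^ i * v ^ (m - 1 - i)‖
      ≤ ∑ i ∈ Finset.range m, ‖u ^ i * v ^ (m - 1 - i)‖ := norm_sum_le _ _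
    _ ≤ ∑ _i ∈ Finset.range m, M ^ (m - 1) := by
        refine Finset.sum_le_sum fun i hi => ?_
        have hi : i ≤ m - 1 := Nat.le_sub_one_of_lt (Finset.mem_range.mp hi)
        calc ‖u ^ i * v ^ (m - 1 - i)‖ = ‖u‖ ^ i * ‖v‖ ^ (m - 1 - i) := by
              rw [norm_mul, norm_pow, norm_pow]
          _ ≤ M ^ i * M ^ (m - 1 - i) := by gcongr
          _ = M ^ (m - 1) := by rw [← pow_add, Nat.add_sub_cancel' hi]
    _ = m * M ^ (m - 1) := by simp

lemma iterate_apply_of_shift {X : Type*} (c : X → ℕ → ℂ) {T : X → X} {lam : ℂ}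
    (hT : ∀ f i, c (T f) i = lam * c f (i + 1)) (f : X) (n i : ℕ) :
    c (T^[n] f) i = lam ^ n * c f (i + n) := by
  induction n generalizing i with
  | zero => simp
  | succ n ih =>
    rw [Function.iterate_succ_apply', hT, ih, pow_succ', add_right_comm, add_assoc, mul_assoc]

lemma smul_iterate_eq_pow_of_shift {X : Type*} [AddCommGroup X] [Module ℂ X]
    {ι : X →ₗ[ℂ] ℕ → ℂ} {T : X → X} {lam : ℂ} (hT : ∀ f i, ι (T f) i = lam * ι f (i + 1))
    {x xm : X} {m : ℕ} (hm : 0 < m) (hxm : ι xm = ι x ^ m) (b : ℂ) (n : ℕ) :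
    ι ((b ^ m * lam ^ ((m - 1) * n)) • T^[n] xm) = ι (b • T^[n] x) ^ m := by
  have hexp : (m - 1) * n + n = n * m := by
    rw [← Nat.succ_mul, Nat.succ_eq_add_one, Nat.sub_add_cancel hm, mul_comm]
  funext i
  simp only [map_smul, Pi.smul_apply, Pi.pow_apply, smul_eq_mul,
    iterate_apply_of_shift ι hT, hxm]
  rw [mul_pow, mul_pow, ← pow_mul, ← hexp, pow_add]
  ring

/-- `X` is read as a space of sequences through `ι`; the model cases are `ℓ^p` for `p < ∞`
and `c₀`. -/
structure IsSolidSequenceSpace {X : Type*} [NormedAddCommGroup X] [Module ℂ X]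
    (ι : X →ₗ[ℂ] ℕ → ℂ) : Prop where
  norm_apply_le : ∀ f i, ‖ι f i‖ ≤ ‖f‖
  norm_mono : ∀ f g, (∀ i, ‖ι f i‖ ≤ ‖ι g i‖) → ‖f‖ ≤ ‖g‖
  exists_eq_of_finite_support : ∀ g : ℕ → ℂ, g.support.Finite → ∃ f, ι f = g
  dense_finite_support : Dense {f : X | (ι f).support.Finite}

namespace IsSolidSequenceSpace

variable {X : Type*} [NormedAddCommGroup X] [NormedSpace ℂ X] {ι : X →ₗ[ℂ] ℕ → ℂ}
  (hX : IsSolidSequenceSpace ι) {m : ℕ}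
include hX

lemma norm_sub_le_of_eq_pow {M : ℝ} {u w s z : X} (hu : ‖u‖ ≤ M) (hw : ‖w‖ ≤ M)
    (hs : ι s = ι u ^ m) (hz : ι z = ι w ^ m) :
    ‖s - z‖ ≤ m * M ^ (m - 1) * ‖u - w‖ := by
  have hM : 0 ≤ M := (norm_nonneg u).trans hu
  set C : ℝ := m * M ^ (m - 1)
  have hC : 0 ≤ C := by positivity
  calc ‖s - z‖ ≤ ‖(C : ℂ) • (u - w)‖ := hX.norm_mono _ _ fun i => by
        simp only [map_sub, map_smul, Pi.sub_apply, Pi.smul_apply, hs, hz, Pi.pow_apply,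
          smul_eq_mul, norm_mul, Complex.norm_real, Real.norm_of_nonneg hC]
        exact norm_pow_sub_pow_le ((hX.norm_apply_le u i).trans hu)
          ((hX.norm_apply_le w i).trans hw) m
    _ = C * ‖u - w‖ := by rw [norm_smul, Complex.norm_real, Real.norm_of_nonneg hC]

lemma exists_pos_forall_norm_sub_lt_of_eq_pow (w : X) {ε : ℝ} (hε : 0 < ε) :
    ∃ δ > 0, ∀ u s z : X, ι s = ι u ^ m → ι z = ι w ^ m → ‖u - w‖ < δ → ‖s - z‖ < ε := by
  set M := ‖w‖ + 1
  set C : ℝ := m * M ^ (m - 1)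
  have hC : 0 < C + 1 := by positivity
  refine ⟨min 1 (ε / (C + 1)), by positivity, fun u s z hs hz huw => ?_⟩
  have hu : ‖u‖ ≤ M := by
    linarith [norm_le_norm_add_norm_sub' u w, huw.trans_le (min_le_left _ _)]
  calc ‖s - z‖ ≤ C * ‖u - w‖ := hX.norm_sub_le_of_eq_pow hu (by linarith) hs hz
    _ ≤ (C + 1) * ‖u - w‖ := by gcongr; linarith
    _ < (C + 1) * (ε / (C + 1)) := by gcongr; exact huw.trans_le (min_le_right _ _)
    _ = ε := by field_simp

lemma dense_eq_pow (hm : m ≠ 0) : Dense {z : X | ∃ w, ι z = ι w ^ m} := by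
  refine hX.dense_finite_support.mono fun z hz => ?_
  -- the root is taken coordinatewise with the principal branch, which fixes `0`
  have hroot : (fun i => ι z i ^ (m⁻¹ : ℂ)).support.Finite := by
    refine (hz : (ι z).support.Finite).subset fun i hi => ?_
    contrapose! hi
    simp [Function.notMem_support.mp hi, Complex.zero_cpow (inv_ne_zero (Nat.cast_ne_zero.mpr hm))]
  obtain ⟨w, hw⟩ := hX.exists_eq_of_finite_support _ hroot
  exact ⟨w, funext fun i => by rw [Pi.pow_apply, hw, Complex.cpow_nat_inv_pow _ hm]⟩

theorem supercyclic_of_eq_pow {T : X → X} {lam : ℂ}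
    (hT : ∀ f i, ι (T f) i = lam * ι f (i + 1)) {x xm : X} (hx : Supercyclic T x)
    (hm : 0 < m) (hxm : ι xm = ι x ^ m) : Supercyclic T xm := by
  refine dense_closure.mp ((hX.dense_eq_pow hm.ne').mono ?_)
  rintro z ⟨w, hz⟩
  refine Metric.mem_closure_iff.mpr fun ε hε => ?_
  obtain ⟨δ, hδ, hclose⟩ := hX.exists_pos_forall_norm_sub_lt_of_eq_pow (m := m) w hε
  obtain ⟨_, hu, b, n, rfl⟩ := Metric.dense_iff.mp hx w δ hδ
  refine ⟨_, ⟨b ^ m * lam ^ ((m - 1) * n), n, rfl⟩, ?_⟩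
  rw [dist_eq_norm']
  exact hclose _ _ _ (smul_iterate_eq_pow_of_shift hT hm hxm b n) hz (mem_ball_iff_norm.mp hu)

end IsSolidSequenceSpace

section lp

variable (p : ℝ≥0∞)

def lpCoeLinearMap : lp (fun _ : ℕ => ℂ) p →ₗ[ℂ] ℕ → ℂ where
  toFun f := ⇑f
  map_add' := lp.coeFn_add
  map_smul' := lp.coeFn_smul

lemma isSolidSequenceSpace_lp [Fact (1 ≤ p)] (hp : p ≠ ⊤) :
    IsSolidSequenceSpace (lpCoeLinearMap p) where
  norm_apply_le := lp.norm_apply_le_norm (zero_lt_one.trans_le Fact.out).ne'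
  norm_mono _ _ := lp.norm_mono (zero_lt_one.trans_le Fact.out).ne'
  exists_eq_of_finite_support g hg :=
    ⟨⟨g, (memℓp_zero hg).of_exponent_ge bot_le⟩, rfl⟩
  dense_finite_support f := by
    refine mem_closure_of_tendsto (lp.hasSum_single hp f) (Eventually.of_forall fun s => ?_)
    refine s.finite_toSet.subset (Function.support_subset_iff'.mpr fun i (hi : i ∉ s) => ?_)
    simp [lpCoeLinearMap, lp.coeFn_single, Finset.sum_pi_single, hi]

end lp

section c₀

lemma ZeroAtInftyContinuousMap.exists_coe_eq_of_finite_support {α β : Type*}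
    [TopologicalSpace α] [DiscreteTopology α] [TopologicalSpace β] [Zero β] (g : α → β)
    (hg : g.support.Finite) : ∃ f : C₀(α, β), ⇑f = g :=
  have hg' : HasCompactSupport g := by
    rw [HasCompactSupport, tsupport, closure_discrete]
    exact hg.isCompact
  ⟨⟨⟨g, continuous_of_discreteTopology⟩, hg'.is_zero_at_infty⟩, rfl⟩

noncomputable def zeroAtInftyCoeLinearMap : C₀(ℕ, ℂ) →ₗ[ℂ] ℕ → ℂ where
  toFun f := ⇑f
  map_add' _ _ := rfl
  map_smul' _ _ := rfl

lemma isSolidSequenceSpace_zeroAtInfty : IsSolidSequenceSpace zeroAtInftyCoeLinearMap where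
  norm_apply_le f := f.toBCF.norm_coe_le_norm
  norm_mono f g h := by
    rw [← ZeroAtInftyContinuousMap.norm_toBCF_eq_norm]
    exact (BoundedContinuousFunction.norm_le (norm_nonneg g)).mpr
      fun i => (h i).trans (g.toBCF.norm_coe_le_norm i)
  exists_eq_of_finite_support := ZeroAtInftyContinuousMap.exists_coe_eq_of_finite_support
  dense_finite_support y := by
    refine Metric.mem_closure_iff.mpr fun ε hε => ?_
    have hy : Tendsto y atTop (𝓝 0) := cocompact_eq_atTop (α := ℕ) ▸ zero_at_infty y
    obtain ⟨N, hN⟩ := Metric.tendsto_atTop.mp hy (ε / 2) (by positivity)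
    have hfin : ((Set.Iio N).indicator y).support.Finite :=
      (Set.finite_Iio N).subset Set.support_indicator_subset
    obtain ⟨z, hz⟩ := ZeroAtInftyContinuousMap.exists_coe_eq_of_finite_support _ hfin
    refine ⟨z, show (⇑z).support.Finite from hz ▸ hfin, ?_⟩
    rw [dist_eq_norm, ← ZeroAtInftyContinuousMap.norm_toBCF_eq_norm]
    refine ((BoundedContinuousFunction.norm_le (by positivity)).mpr fun i => ?_).trans_lt
      (half_lt_self hε)
    by_cases hi : i < N
    · simp [hz, hi]; positivity
    · simpa [hz, hi] using (hN i (not_lt.mp hi)).le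

end c₀

theorem stmt4_general (p : ℝ≥0∞) [Fact (1 ≤ p)] (hp : p ≠ ⊤) (lam : ℂ) :
    (∀ T : lp (fun _ : ℕ => ℂ) p → lp (fun _ : ℕ => ℂ) p,
      (∀ (x : lp (fun _ : ℕ => ℂ) p) (i : ℕ), T x i = lam * x (i + 1)) →
      ∀ x : lp (fun _ : ℕ => ℂ) p, Supercyclic T x →
        ∀ m : ℕ, 1 ≤ m → ∀ xm : lp (fun _ : ℕ => ℂ) p,
          (∀ i : ℕ, xm i = x i ^ m) → Supercyclic T xm) ∧
    (∀ T : C₀(ℕ, ℂ) → C₀(ℕ, ℂ),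
      (∀ (x : C₀(ℕ, ℂ)) (i : ℕ), T x i = lam * x (i + 1)) →
      ∀ x : C₀(ℕ, ℂ), Supercyclic T x →
        ∀ m : ℕ, 1 ≤ m → ∀ xm : C₀(ℕ, ℂ),
          (∀ i : ℕ, xm i = x i ^ m) → Supercyclic T xm) :=
  ⟨fun _ hT _ hx _ hm _ hxm =>
    (isSolidSequenceSpace_lp p hp).supercyclic_of_eq_pow hT hx hm (funext hxm),
   fun _ hT _ hx _ hm _ hxm =>
    isSolidSequenceSpace_zeroAtInfty.supercyclic_of_eq_pow hT hx hm (funext hxm)⟩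

/-- On `X = ℓ^p` (`1 ≤ p < ∞`) or `X = c₀` with coordinatewise
multiplication, if `x` is supercyclic for `λB` (`|λ| > 1`), then every coordinatewise
power `x^m` (`m ≥ 1`) is supercyclic for `λB`. -/
theorem stmt4 (p : ℝ≥0∞) [Fact (1 ≤ p)] (hp : p ≠ ⊤) (lam : ℂ) (hlam : 1 < ‖lam‖) :
    (∀ T : lp (fun _ : ℕ => ℂ) p → lp (fun _ : ℕ => ℂ) p,
      (∀ (x : lp (fun _ : ℕ => ℂ) p) (i : ℕ), T x i = lam * x (i + 1)) →
      ∀ x : lp (fun _ : ℕ => ℂ) p, Supercyclic T x →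
        ∀ m : ℕ, 1 ≤ m → ∀ xm : lp (fun _ : ℕ => ℂ) p,
          (∀ i : ℕ, xm i = x i ^ m) → Supercyclic T xm) ∧
    (∀ T : C₀(ℕ, ℂ) → C₀(ℕ, ℂ),
      (∀ (x : C₀(ℕ, ℂ)) (i : ℕ), T x i = lam * x (i + 1)) →
      ∀ x : C₀(ℕ, ℂ), Supercyclic T x →
        ∀ m : ℕ, 1 ≤ m → ∀ xm : C₀(ℕ, ℂ),
          (∀ i : ℕ, xm i = x i ^ m) → Supercyclic T xm) :=
  stmt4_general p hp lam
end

section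
/- Let X = ℓ^p (1 ≤ p < ∞) or c₀ with coordinatewise multiplication, λ ∈ ℂ with |λ| > 1, and let 𝒜 be a finitely invariant Furstenberg family on ℕ₀. Let x₀ ∈ X and m ∈ ℕ. If x₀^m is 𝒜-hypercyclic for λB, then for any N ≥ m and any complex scalars α_m,...,α_N with α_m ≠ 0, the vector Σ_{ν=m}^N α_ν x₀^ν is also 𝒜-hypercyclic for λB. -/
open Filter
open scoped ZeroAtInfty ENNReal

/-- A Furstenberg family: a nonempty, upward-closed family of subsets of ℕ not containing ∅. -/
def FurstenbergFamily (F : Set (Set ℕ)) : Prop :=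
  F.Nonempty ∧ ∅ ∉ F ∧ ∀ A ∈ F, ∀ B : Set ℕ, A ⊆ B → B ∈ F

/-- A family is finitely invariant if it is stable under removing initial segments. -/
def FinInvariant (F : Set (Set ℕ)) : Prop :=
  ∀ A ∈ F, ∀ N : ℕ, A \ Set.Iic N ∈ F

/-- A vector is 𝒜-hypercyclic for `T` if its visit times to every nonempty open set
belong to the family. -/
def AHypercyclic {X : Type*} [TopologicalSpace X] (F : Set (Set ℕ)) (T : X → X) (x : X) : Prop :=
  ∀ U : Set X, IsOpen U → U.Nonempty → {n : ℕ | T^[n] x ∈ U} ∈ F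

theorem key_arith (s ε : ℝ) (hs : 0 ≤ s) (hε : 0 < ε) :
    s * (ε / (2 * (s + 1))) < ε / 2 := by
  rw [mul_div_assoc', div_lt_div_iff₀ (by positivity) two_pos]
  nlinarith

theorem generic_step {X : Type*} [NormedAddCommGroup X] [NormedSpace ℂ X]
    (c : X → ℕ → ℂ)
    (hsub : ∀ (x y : X) (i : ℕ), c (x - y) i = c x i - c y i)
    (hsmul : ∀ (a : ℂ) (x : X) (i : ℕ), c (a • x) i = a * c x i)
    (hsolid : ∀ x y : X, (∀ i, ‖c x i‖ ≤ ‖c y i‖) → ‖x‖ ≤ ‖y‖)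
    (lam : ℂ)
    (F : Set (Set ℕ)) (hF : FurstenbergFamily F) (hFi : FinInvariant F)
    (T : X → X) (hT : ∀ (x : X) (i : ℕ), c (T x) i = lam * c x (i + 1))
    (x₀ : X) (h0 : Tendsto (fun i => c x₀ i) atTop (nhds 0))
    (m : ℕ) (hm : 1 ≤ m) (xm : X) (hxm : ∀ i, c xm i = c x₀ i ^ m)
    (hhc : AHypercyclic F T xm)
    (N : ℕ) (hmN : m ≤ N) (α : ℕ → ℂ) (hα : α m ≠ 0)
    (y : X) (hy : ∀ i, c y i = ∑ ν ∈ Finset.Icc m N, α ν * c x₀ i ^ ν) :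
    AHypercyclic F T y := by
  -- coordinates of iterates
  have hiter : ∀ (x : X) (n i : ℕ), c (T^[n] x) i = lam ^ n * c x (i + n) := by
    intro x n
    induction n with
    | zero => intro i; simp
    | succ n ih =>
      intro i
      rw [Function.iterate_succ_apply', hT, ih, pow_succ,
        show i + 1 + n = i + (n + 1) by omega]
      ring
  intro U hU hUne
  obtain ⟨u, hu⟩ := hUne
  obtain ⟨ε, hε, hball⟩ := Metric.isOpen_iff.mp hU u hu
  set a := α m with ha_def
  have ha : 0 < ‖a‖ := norm_pos_iff.mpr hα
  set K : ℝ := ∑ ν ∈ Finset.Ioc m N, ‖α ν‖ with hK_def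
  have hK : 0 ≤ K := Finset.sum_nonneg fun _ _ => norm_nonneg _
  set C : ℝ := ‖a‖⁻¹ * ‖u‖ + ε / (2 * ‖a‖) with hC_def
  have hC : 0 ≤ C := by positivity
  set δ : ℝ := min 1 (ε / (2 * (K * C + 1))) with hδ_def
  have hδpos : 0 < δ := lt_min one_pos (by positivity)
  have hδ1 : δ ≤ 1 := min_le_left _ _
  have hKδC : K * δ * C < ε / 2 := by
    have h1 : δ ≤ ε / (2 * (K * C + 1)) := min_le_right _ _
    have h2 : K * δ * C ≤ (K * C) * (ε / (2 * (K * C + 1))) := by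
      have h2' := mul_le_mul_of_nonneg_left h1 (mul_nonneg hK hC)
      calc K * δ * C = (K * C) * δ := by ring
        _ ≤ _ := h2'
    have h3 : (K * C) * (ε / (2 * (K * C + 1))) < ε / 2 :=
      key_arith (K * C) ε (mul_nonneg hK hC) hε
    linarith
  clear_value K C δ
  obtain ⟨N₀, hN₀⟩ := (Metric.tendsto_atTop.mp h0) δ hδpos
  have hsmall : ∀ k, N₀ ≤ k → ‖c x₀ k‖ ≤ δ := by
    intro k hk
    have := hN₀ k hk
    rw [dist_zero_right] at this
    exact this.le
  set V : Set X := Metric.ball (a⁻¹ • u) (ε / (2 * ‖a‖)) with hV_def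
  have hA : {n : ℕ | T^[n] xm ∈ V} ∈ F :=
    hhc V Metric.isOpen_ball ⟨_, Metric.mem_ball_self (by positivity)⟩
  refine hF.2.2 _ (hFi _ hA N₀) _ ?_
  rintro n ⟨hnA, hnN⟩
  have hnN' : N₀ < n := by simpa using hnN
  -- notation
  set w := T^[n] xm with hw_def
  set z := T^[n] y with hz_def
  have hwV : ‖w - a⁻¹ • u‖ < ε / (2 * ‖a‖) := by
    have := Metric.mem_ball.mp hnA
    rwa [dist_eq_norm] at this
  have hwC : ‖w‖ ≤ C := by
    have h4 : ‖w‖ ≤ ‖w - a⁻¹ • u‖ + ‖a⁻¹ • u‖ := by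
      calc ‖w‖ = ‖(w - a⁻¹ • u) + a⁻¹ • u‖ := by rw [sub_add_cancel]
      _ ≤ _ := norm_add_le _ _
    have h5 : ‖a⁻¹ • u‖ = ‖a‖⁻¹ * ‖u‖ := by rw [norm_smul, norm_inv]
    rw [h5] at h4
    rw [hC_def]; linarith
  -- coordinates of w
  have hwc : ∀ i, c w i = lam ^ n * c x₀ (i + n) ^ m := by
    intro i; rw [hw_def, hiter, hxm]
  -- the remainder d
  set d := z - a • w with hd_def
  have hd_coord : ∀ i, c d i = lam ^ n * ∑ ν ∈ Finset.Ioc m N, α ν * c x₀ (i + n) ^ ν := by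
    intro i
    rw [hd_def, hsub, hsmul, hwc, hz_def, hiter, hy,
      Finset.Icc_eq_cons_Ioc hmN, Finset.sum_cons]
    ring
  have hd_bound : ∀ i, ‖c d i‖ ≤ (K * δ) * ‖c w i‖ := by
    intro i
    have ht : ‖c x₀ (i + n)‖ ≤ δ := hsmall _ (by omega)
    have ht0 : (0:ℝ) ≤ ‖c x₀ (i + n)‖ := norm_nonneg _
    have hS : ‖∑ ν ∈ Finset.Ioc m N, α ν * c x₀ (i + n) ^ ν‖
        ≤ (K * δ) * ‖c x₀ (i + n)‖ ^ m := by
      calc ‖∑ ν ∈ Finset.Ioc m N, α ν * c x₀ (i + n) ^ ν‖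
        ≤ ∑ ν ∈ Finset.Ioc m N, ‖α ν * c x₀ (i + n) ^ ν‖ := norm_sum_le _ _
      _ ≤ ∑ ν ∈ Finset.Ioc m N, ‖α ν‖ * (‖c x₀ (i + n)‖ ^ m * δ) := by
          refine Finset.sum_le_sum fun ν hν => ?_
          rw [norm_mul, norm_pow]
          refine mul_le_mul_of_nonneg_left ?_ (norm_nonneg _)
          obtain ⟨hν1, hν2⟩ := Finset.mem_Ioc.mp hν
          have : ‖c x₀ (i + n)‖ ^ ν = ‖c x₀ (i + n)‖ ^ m * ‖c x₀ (i + n)‖ ^ (ν - m) := by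
            rw [← pow_add]; congr 1; omega
          rw [this]
          refine mul_le_mul_of_nonneg_left ?_ (by positivity)
          calc ‖c x₀ (i + n)‖ ^ (ν - m) ≤ δ ^ (ν - m) := pow_le_pow_left₀ ht0 ht _
            _ ≤ δ := pow_le_of_le_one hδpos.le hδ1 (by omega)
      _ = (K * δ) * ‖c x₀ (i + n)‖ ^ m := by
          rw [← Finset.sum_mul, ← hK_def]; ring
    rw [hd_coord, hwc]
    calc ‖lam ^ n * ∑ ν ∈ Finset.Ioc m N, α ν * c x₀ (i + n) ^ ν‖
        = ‖lam‖ ^ n * ‖∑ ν ∈ Finset.Ioc m N, α ν * c x₀ (i + n) ^ ν‖ := by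
          rw [norm_mul, norm_pow]
      _ ≤ ‖lam‖ ^ n * ((K * δ) * ‖c x₀ (i + n)‖ ^ m) :=
          mul_le_mul_of_nonneg_left hS (by positivity)
      _ = (K * δ) * ‖lam ^ n * c x₀ (i + n) ^ m‖ := by
          rw [norm_mul, norm_pow, norm_pow]; ring
  have hdnorm : ‖d‖ < ε / 2 := by
    have h6 : ‖d‖ ≤ ‖((K * δ : ℝ) : ℂ) • w‖ := by
      refine hsolid _ _ fun i => ?_
      rw [hsmul, norm_mul, Complex.norm_real, Real.norm_eq_abs,
        abs_of_nonneg (by positivity)]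
      exact hd_bound i
    have h7 : ‖((K * δ : ℝ) : ℂ) • w‖ = (K * δ) * ‖w‖ := by
      rw [norm_smul, Complex.norm_real, Real.norm_eq_abs, abs_of_nonneg (by positivity)]
    have h8 : (K * δ) * ‖w‖ ≤ (K * δ) * C :=
      mul_le_mul_of_nonneg_left hwC (by positivity)
    have h6' : ‖d‖ ≤ (K * δ) * ‖w‖ := by rw [← h7]; exact h6
    calc ‖d‖ ≤ (K * δ) * C := le_trans h6' h8
      _ = K * δ * C := by ring
      _ < ε / 2 := hKδC
  have haw : ‖a • w - u‖ < ε / 2 := by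
    have : a • w - u = a • (w - a⁻¹ • u) := by
      rw [smul_sub, smul_inv_smul₀ hα]
    rw [this, norm_smul]
    calc ‖a‖ * ‖w - a⁻¹ • u‖ < ‖a‖ * (ε / (2 * ‖a‖)) :=
          mul_lt_mul_of_pos_left hwV ha
      _ = ε / 2 := by
          rw [mul_div_assoc', mul_comm (2:ℝ) ‖a‖, mul_div_mul_left _ _ ha.ne']
  have hz : z ∈ Metric.ball u ε := by
    rw [Metric.mem_ball, dist_eq_norm]
    calc ‖z - u‖ = ‖(z - a • w) + (a • w - u)‖ := by rw [sub_add_sub_cancel]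
      _ ≤ ‖z - a • w‖ + ‖a • w - u‖ := norm_add_le _ _
      _ < ε / 2 + ε / 2 := by exact add_lt_add hdnorm haw
      _ = ε := by ring
  exact hball hz

/-- On `X = ℓ^p` (`1 ≤ p < ∞`) or `X = c₀` with coordinatewise
multiplication, if `𝒜` is a finitely invariant Furstenberg family and the coordinatewise
power `x₀^m` is 𝒜-hypercyclic for `λB` (`|λ| > 1`), then so is `Σ_{ν=m}^N α_ν x₀^ν`
whenever `α_m ≠ 0`. -/
theorem stmt5 (p : ℝ≥0∞) [Fact (1 ≤ p)] (hp : p ≠ ⊤) (lam : ℂ) (hlam : 1 < ‖lam‖)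
    (F : Set (Set ℕ)) (hF : FurstenbergFamily F) (hFi : FinInvariant F) :
    (∀ T : lp (fun _ : ℕ => ℂ) p → lp (fun _ : ℕ => ℂ) p,
      (∀ (x : lp (fun _ : ℕ => ℂ) p) (i : ℕ), T x i = lam * x (i + 1)) →
      ∀ (x₀ : lp (fun _ : ℕ => ℂ) p) (m : ℕ), 1 ≤ m →
        ∀ xm : lp (fun _ : ℕ => ℂ) p, (∀ i : ℕ, xm i = x₀ i ^ m) →
          AHypercyclic F T xm →
          ∀ (N : ℕ), m ≤ N → ∀ α : ℕ → ℂ, α m ≠ 0 →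
            ∀ y : lp (fun _ : ℕ => ℂ) p,
              (∀ i : ℕ, y i = ∑ ν ∈ Finset.Icc m N, α ν * x₀ i ^ ν) →
              AHypercyclic F T y) ∧
    (∀ T : C₀(ℕ, ℂ) → C₀(ℕ, ℂ),
      (∀ (x : C₀(ℕ, ℂ)) (i : ℕ), T x i = lam * x (i + 1)) →
      ∀ (x₀ : C₀(ℕ, ℂ)) (m : ℕ), 1 ≤ m →
        ∀ xm : C₀(ℕ, ℂ), (∀ i : ℕ, xm i = x₀ i ^ m) →
          AHypercyclic F T xm →
          ∀ (N : ℕ), m ≤ N → ∀ α : ℕ → ℂ, α m ≠ 0 →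
            ∀ y : C₀(ℕ, ℂ),
              (∀ i : ℕ, y i = ∑ ν ∈ Finset.Icc m N, α ν * x₀ i ^ ν) →
              AHypercyclic F T y) := by
  have hpt : 0 < p.toReal :=
    ENNReal.toReal_pos (lt_of_lt_of_le zero_lt_one Fact.out).ne' hp
  constructor
  · intro T hT x₀ m hm xm hxm hhc N hmN α hα y hy
    refine generic_step (fun x i => x i) ?_ ?_ ?_ lam F hF hFi T hT x₀ ?_ m hm xm hxm hhc
      N hmN α hα y hy
    · intro x y' i; simp only [lp.coeFn_sub, Pi.sub_apply]
    · intro a x i; simp only [lp.coeFn_smul, Pi.smul_apply, smul_eq_mul]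
    · intro f g h
      simp only at h
      refine lp.norm_le_of_tsum_le hpt (norm_nonneg g) ?_
      rw [lp.norm_rpow_eq_tsum hpt g]
      have hg := (lp.memℓp g).summable hpt
      refine Summable.tsum_le_tsum (fun i => Real.rpow_le_rpow (norm_nonneg _) (h i) hpt.le) ?_ hg
      exact hg.of_nonneg_of_le (fun i => Real.rpow_nonneg (norm_nonneg _) _)
        (fun i => Real.rpow_le_rpow (norm_nonneg _) (h i) hpt.le)
    · have hs := ((lp.memℓp x₀).summable hpt).tendsto_atTop_zero
      rw [tendsto_zero_iff_norm_tendsto_zero]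
      refine Metric.tendsto_atTop.mpr fun ε hε => ?_
      obtain ⟨n₀, hn₀⟩ := Metric.tendsto_atTop.mp hs (ε ^ p.toReal) (Real.rpow_pos_of_pos hε _)
      refine ⟨n₀, fun n hn => ?_⟩
      have h1 := hn₀ n hn
      rw [Real.dist_eq, sub_zero, abs_of_nonneg (Real.rpow_nonneg (norm_nonneg _) _)] at h1
      rw [Real.dist_eq, sub_zero, abs_of_nonneg (norm_nonneg _)]
      by_contra hcon
      push_neg at hcon
      exact absurd h1 (not_lt.mpr (Real.rpow_le_rpow hε.le hcon hpt.le))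
  · intro T hT x₀ m hm xm hxm hhc N hmN α hα y hy
    refine generic_step (fun x i => x i) ?_ ?_ ?_ lam F hF hFi T hT x₀ ?_ m hm xm hxm hhc
      N hmN α hα y hy
    · intro x y' i; simp only [ZeroAtInftyContinuousMap.coe_sub, Pi.sub_apply]
    · intro a x i; simp only [ZeroAtInftyContinuousMap.coe_smul, Pi.smul_apply, smul_eq_mul]
    · intro f g h
      rw [← ZeroAtInftyContinuousMap.norm_toBCF_eq_norm,
        ← ZeroAtInftyContinuousMap.norm_toBCF_eq_norm]
      refine (BoundedContinuousFunction.norm_le (norm_nonneg _)).mpr fun i => ?_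
      exact (h i).trans (BoundedContinuousFunction.norm_coe_le_norm g.toBCF i)
    · have h0 := zero_at_infty x₀
      rwa [cocompact_eq_cofinite, Nat.cofinite_eq_atTop] at h0
end

section
/- Let X be a complex Banach space, (a_r)_{r≥1} a sequence of unit vectors in X, and (φ_r)_{r≥1} continuous linear functionals on X with ‖φ_r‖ ≥ 1 and φ_s(a_r) = δ_{rs}. Define y × x = Σ_{r=1}^∞ (2^{−r}/‖φ_r‖²) φ_r(y)φ_r(x) a_r. Then the series converges absolutely for all x, y, the product × is commutative and associative, and ‖y × x‖ ≤ ‖y‖‖x‖, so (X, ×) is a commutative Banach algebra. Moreover, for z, y, x ∈ X, z × (y × x) = Σ_{r=1}^∞ (2^{−2r}/‖φ_r‖⁴) φ_r(z)φ_r(y)φ_r(x) a_r. -/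
/-!
Each term of `y × x` has norm at most `2^{-(r+1)} ‖y‖‖x‖`, since `|φ_r(y) φ_r(x)| ≤ ‖φ_r‖² ‖y‖‖x‖`;
summing the geometric series gives absolute convergence and `‖y × x‖ ≤ ‖y‖‖x‖`.
By biorthogonality `φ_s(y × x) = w_s φ_s(y) φ_s(x)`, where `w_s = 2^{-(s+1)}/‖φ_s‖²`, so
`z × (y × x) = Σ_r w_r² φ_r(z) φ_r(y) φ_r(x) a_r`, which is symmetric in `x, y, z`;
associativity follows from this and commutativity.
-/

/-- The product `y × x = Σ_r (2^{−(r+1)}/‖φ_r‖²) φ_r(y)φ_r(x) • a_r`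
(indices start at `0`, so the weight of the `r`-th term is `2^{−(r+1)}`). -/
noncomputable def seqMul {X : Type*} [NormedAddCommGroup X] [NormedSpace ℂ X]
    (a : ℕ → X) (φ : ℕ → X →L[ℂ] ℂ) (y x : X) : X :=
  ∑' r : ℕ, ((((2 : ℝ) ^ (r + 1))⁻¹ / ‖φ r‖ ^ 2) • ((φ r y * φ r x) • a r))

lemma ContinuousLinearMap.norm_apply_mul_apply_div_sq_le {E 𝕜 : Type*} [NormedAddCommGroup E]
    [RCLike 𝕜] [NormedSpace 𝕜 E] (f : E →L[𝕜] 𝕜) (x y : E) :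
    ‖f x * f y‖ / ‖f‖ ^ 2 ≤ ‖x‖ * ‖y‖ := by
  rcases (norm_nonneg f).eq_or_lt with hf | hf
  · rw [← hf]
    simpa using mul_nonneg (norm_nonneg x) (norm_nonneg y)
  rw [div_le_iff₀ (by positivity), norm_mul]
  calc ‖f x‖ * ‖f y‖ ≤ (‖f‖ * ‖x‖) * (‖f‖ * ‖y‖) :=
        mul_le_mul (f.le_opNorm x) (f.le_opNorm y) (norm_nonneg _) (by positivity)
    _ = ‖x‖ * ‖y‖ * ‖f‖ ^ 2 := by ring

section

variable {X : Type*} [NormedAddCommGroup X] [NormedSpace ℂ X] {a : ℕ → X} {φ : ℕ → X →L[ℂ] ℂ}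

lemma norm_seqMul_term_le (ha : ∀ r, ‖a r‖ ≤ 1) (x y : X) (r : ℕ) :
    ‖(((2 : ℝ) ^ (r + 1))⁻¹ / ‖φ r‖ ^ 2) • ((φ r y * φ r x) • a r)‖ ≤ ‖y‖ * ‖x‖ / 2 / 2 ^ r := by
  rw [norm_smul, norm_smul, Real.norm_of_nonneg (by positivity)]
  calc ((2 : ℝ) ^ (r + 1))⁻¹ / ‖φ r‖ ^ 2 * (‖φ r y * φ r x‖ * ‖a r‖)
      ≤ ((2 : ℝ) ^ (r + 1))⁻¹ * (‖φ r y * φ r x‖ / ‖φ r‖ ^ 2) := by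
        rw [div_mul_eq_mul_div, mul_div_assoc]
        gcongr
        exact mul_le_of_le_one_right (norm_nonneg _) (ha r)
    _ ≤ ((2 : ℝ) ^ (r + 1))⁻¹ * (‖y‖ * ‖x‖) := by
        gcongr
        exact (φ r).norm_apply_mul_apply_div_sq_le y x
    _ = ‖y‖ * ‖x‖ / 2 / 2 ^ r := by
        rw [pow_succ]
        field_simp

lemma summable_norm_seqMul_term (ha : ∀ r, ‖a r‖ ≤ 1) (x y : X) :
    Summable fun r : ℕ => ‖(((2 : ℝ) ^ (r + 1))⁻¹ / ‖φ r‖ ^ 2) • ((φ r y * φ r x) • a r)‖ :=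
  (summable_geometric_two' _).of_nonneg_of_le (fun _ => norm_nonneg _) (norm_seqMul_term_le ha x y)

lemma norm_seqMul_le (ha : ∀ r, ‖a r‖ ≤ 1) (x y : X) : ‖seqMul a φ y x‖ ≤ ‖y‖ * ‖x‖ :=
  tsum_of_norm_bounded (hasSum_geometric_two' _) (norm_seqMul_term_le ha x y)

lemma seqMul_comm (x y : X) : seqMul a φ y x = seqMul a φ x y :=
  tsum_congr fun r => by rw [mul_comm (φ r y)]

lemma apply_seqMul [CompleteSpace X] (ha : ∀ r, ‖a r‖ ≤ 1)
    (hbi : ∀ r s : ℕ, φ s (a r) = if r = s then 1 else 0) (x y : X) (s : ℕ) :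
    φ s (seqMul a φ y x) = (((2 : ℝ) ^ (s + 1))⁻¹ / ‖φ s‖ ^ 2 : ℝ) * (φ s y * φ s x) := by
  rw [seqMul, (φ s).map_tsum (summable_norm_seqMul_term ha x y).of_norm]
  have hterm : ∀ r, φ s ((((2 : ℝ) ^ (r + 1))⁻¹ / ‖φ r‖ ^ 2) • ((φ r y * φ r x) • a r))
      = if r = s then (((2 : ℝ) ^ (s + 1))⁻¹ / ‖φ s‖ ^ 2 : ℝ) * (φ s y * φ s x) else 0 := by
    intro r
    rw [(φ s).map_smul_of_tower, map_smul, hbi]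
    split_ifs with h
    · subst h
      simp [Complex.real_smul]
    · simp
  rw [tsum_congr hterm, tsum_ite_eq]

lemma seqMul_seqMul [CompleteSpace X] (ha : ∀ r, ‖a r‖ ≤ 1)
    (hbi : ∀ r s : ℕ, φ s (a r) = if r = s then 1 else 0) (x y z : X) :
    seqMul a φ z (seqMul a φ y x)
      = ∑' r : ℕ, ((((2 : ℝ) ^ (2 * (r + 1)))⁻¹ / ‖φ r‖ ^ 4) •
          ((φ r z * φ r y * φ r x) • a r)) := by
  refine tsum_congr fun r => ?_
  rw [apply_seqMul ha hbi, ← Complex.coe_smul, ← Complex.coe_smul, smul_smul, smul_smul]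
  congr 1
  push_cast
  ring

lemma seqMul_assoc [CompleteSpace X] (ha : ∀ r, ‖a r‖ ≤ 1)
    (hbi : ∀ r s : ℕ, φ s (a r) = if r = s then 1 else 0) (x y z : X) :
    seqMul a φ (seqMul a φ z y) x = seqMul a φ z (seqMul a φ y x) := by
  rw [seqMul_comm x, seqMul_seqMul ha hbi, seqMul_seqMul ha hbi]
  exact tsum_congr fun r => by congr 2; ring

end

theorem stmt15_general (X : Type*) [NormedAddCommGroup X] [NormedSpace ℂ X] [CompleteSpace X]
    (a : ℕ → X) (ha : ∀ r, ‖a r‖ = 1)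
    (φ : ℕ → X →L[ℂ] ℂ)
    (hbi : ∀ r s : ℕ, φ s (a r) = if r = s then 1 else 0) :
    (∀ x y : X, Summable fun r : ℕ =>
      ‖(((2 : ℝ) ^ (r + 1))⁻¹ / ‖φ r‖ ^ 2) • ((φ r y * φ r x) • a r)‖) ∧
    (∀ x y : X, seqMul a φ y x = seqMul a φ x y) ∧
    (∀ x y z : X, seqMul a φ (seqMul a φ z y) x = seqMul a φ z (seqMul a φ y x)) ∧
    (∀ x y : X, ‖seqMul a φ y x‖ ≤ ‖y‖ * ‖x‖) ∧
    (∀ x y z : X, seqMul a φ z (seqMul a φ y x)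
      = ∑' r : ℕ, ((((2 : ℝ) ^ (2 * (r + 1)))⁻¹ / ‖φ r‖ ^ 4) •
          ((φ r z * φ r y * φ r x) • a r))) := by
  have ha' : ∀ r, ‖a r‖ ≤ 1 := fun r => (ha r).le
  exact ⟨summable_norm_seqMul_term ha', seqMul_comm, seqMul_assoc ha' hbi, norm_seqMul_le ha',
    seqMul_seqMul ha' hbi⟩

/-- Let `X` be a complex Banach space, `(a_r)` unit vectors and
`(φ_r)` continuous linear functionals with `‖φ_r‖ ≥ 1` and `φ_s(a_r) = δ_{rs}`.
Then the series defining `y × x` converges absolutely, `×` is commutative and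
associative, `‖y × x‖ ≤ ‖y‖‖x‖` (so `(X, ×)` is a commutative Banach algebra), and
`z × (y × x) = Σ_r (2^{−2(r+1)}/‖φ_r‖⁴) φ_r(z)φ_r(y)φ_r(x) • a_r`. -/
theorem stmt15 (X : Type*) [NormedAddCommGroup X] [NormedSpace ℂ X] [CompleteSpace X]
    (a : ℕ → X) (ha : ∀ r, ‖a r‖ = 1)
    (φ : ℕ → X →L[ℂ] ℂ) (hφ : ∀ r, 1 ≤ ‖φ r‖)
    (hbi : ∀ r s : ℕ, φ s (a r) = if r = s then 1 else 0) :
    (∀ x y : X, Summable fun r : ℕ =>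
      ‖(((2 : ℝ) ^ (r + 1))⁻¹ / ‖φ r‖ ^ 2) • ((φ r y * φ r x) • a r)‖) ∧
    (∀ x y : X, seqMul a φ y x = seqMul a φ x y) ∧
    (∀ x y z : X, seqMul a φ (seqMul a φ z y) x = seqMul a φ z (seqMul a φ y x)) ∧
    (∀ x y : X, ‖seqMul a φ y x‖ ≤ ‖y‖ * ‖x‖) ∧
    (∀ x y z : X, seqMul a φ z (seqMul a φ y x)
      = ∑' r : ℕ, ((((2 : ℝ) ^ (2 * (r + 1)))⁻¹ / ‖φ r‖ ^ 4) •
          ((φ r z * φ r y * φ r x) • a r))) :=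
  stmt15_general X a ha φ hbi
end

section
/- In the setting of the product y × x = Σ_r (2^{−r}/‖φ_r‖²)φ_r(y)φ_r(x)a_r with biorthogonal system φ_s(a_r) = δ_{rs}, for any vectors x_1,...,x_s with φ_r(x_l) = λ_{l,r} and any multi-index β = (β_1,...,β_s) with |β| ≥ 2, the product of powers satisfies x_1^{β_1} × x_2^{β_2} × ⋯ × x_s^{β_s} = Σ_{r=1}^∞ (2^{−r(|β|−1)}/‖φ_r‖^{2|β|−2}) λ_{1,r}^{β_1} ⋯ λ_{s,r}^{β_s} a_r. -/
set_option linter.unusedSectionVars false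


/-- Left-associated product of `z` with a list of further factors. -/
def leftProd {X : Type*} (mul : X → X → X) : X → List X → X
  | z, [] => z
  | z, y :: ys => leftProd mul (mul z y) ys

/-- Product of a list of factors in a non-unital multiplicative structure;
the value on the empty list is an (irrelevant) default element. -/
def listProdNU {X : Type*} (mul : X → X → X) (d : X) : List X → X
  | [] => d
  | y :: ys => leftProd mul y ys

section Aux

variable {X : Type*} [NormedAddCommGroup X] [NormedSpace ℂ X] [CompleteSpace X]

/-- The scalar coefficient in the product, as a complex number. -/
noncomputable def dcoef (φ : ℕ → X →L[ℂ] ℂ) (r : ℕ) : ℂ :=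
  ((((2 : ℝ) ^ (r + 1))⁻¹ / ‖φ r‖ ^ 2 : ℝ) : ℂ)

lemma dcoef_norm (φ : ℕ → X →L[ℂ] ℂ) (r : ℕ) :
    ‖dcoef φ r‖ = ((2 : ℝ) ^ (r + 1))⁻¹ / ‖φ r‖ ^ 2 := by
  rw [dcoef, Complex.norm_real, Real.norm_eq_abs, abs_of_nonneg (by positivity)]

lemma summable_decay (C : ℝ) : Summable (fun r : ℕ => C * ((2 : ℝ) ^ (r + 1))⁻¹) := by
  have h : (fun r : ℕ => C * ((2 : ℝ) ^ (r + 1))⁻¹) = fun r => (C / 2) * ((1:ℝ)/2) ^ r := by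
    funext r
    rw [pow_succ, mul_inv, one_div, inv_pow]
    ring
  rw [h]
  exact summable_geometric_two.mul_left _

lemma summable_smul_decay (a : ℕ → X) (ha : ∀ r, ‖a r‖ = 1)
    {μ : ℕ → ℂ} {C : ℝ} (hμ : ∀ r, ‖μ r‖ ≤ C * ((2 : ℝ) ^ (r + 1))⁻¹) :
    Summable fun r => μ r • a r := by
  apply Summable.of_norm
  refine Summable.of_nonneg_of_le (fun r => norm_nonneg _) (fun r => ?_) (summable_decay C)
  rw [norm_smul, ha, mul_one]
  exact hμ r

lemma phi_tsum (a : ℕ → X) (ha : ∀ r, ‖a r‖ = 1) (φ : ℕ → X →L[ℂ] ℂ)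
    (hbi : ∀ r s : ℕ, φ s (a r) = if r = s then 1 else 0)
    {μ : ℕ → ℂ} {C : ℝ} (hμ : ∀ r, ‖μ r‖ ≤ C * ((2 : ℝ) ^ (r + 1))⁻¹) (j : ℕ) :
    φ j (∑' r, μ r • a r) = μ j := by
  rw [ContinuousLinearMap.map_tsum (φ j) (summable_smul_decay a ha hμ)]
  rw [tsum_eq_single j (fun r hr => by simp [hbi r j, hr])]
  simp [hbi j j]

lemma seqMul_eq (a : ℕ → X) (φ : ℕ → X →L[ℂ] ℂ) (y x : X) :
    seqMul a φ y x = ∑' r, (dcoef φ r * (φ r y * φ r x)) • a r := by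
  refine tsum_congr fun r => ?_
  rw [dcoef]
  conv_rhs => rw [mul_smul, Complex.coe_smul]

lemma dcoef_mul_apply_le (φ : ℕ → X →L[ℂ] ℂ) (hφ : ∀ r, 1 ≤ ‖φ r‖) (x : X) (r : ℕ) :
    ‖dcoef φ r * φ r x‖ ≤ ‖x‖ := by
  have h0 : (0:ℝ) < ‖φ r‖ := lt_of_lt_of_le one_pos (hφ r)
  have h1 : ((2:ℝ) ^ (r + 1))⁻¹ ≤ 1 := by
    rw [inv_le_one_iff₀]
    right
    exact one_le_pow₀ one_le_two
  have h2 : ‖φ r‖⁻¹ ≤ 1 := by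
    rw [inv_le_one_iff₀]; right; exact hφ r
  calc ‖dcoef φ r * φ r x‖ = ‖dcoef φ r‖ * ‖φ r x‖ := norm_mul _ _
    _ ≤ (((2:ℝ) ^ (r + 1))⁻¹ / ‖φ r‖ ^ 2) * (‖φ r‖ * ‖x‖) := by
        rw [dcoef_norm]
        exact mul_le_mul_of_nonneg_left ((φ r).le_opNorm x) (by positivity)
    _ = ((2:ℝ) ^ (r + 1))⁻¹ * ‖φ r‖⁻¹ * ‖x‖ := by field_simp
    _ ≤ 1 * 1 * ‖x‖ := by
        have := norm_nonneg x
        gcongr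
    _ = ‖x‖ := by ring

lemma seqMul_tsum (a : ℕ → X) (ha : ∀ r, ‖a r‖ = 1) (φ : ℕ → X →L[ℂ] ℂ)
    (hbi : ∀ r s : ℕ, φ s (a r) = if r = s then 1 else 0)
    {μ : ℕ → ℂ} {C : ℝ} (hμ : ∀ r, ‖μ r‖ ≤ C * ((2 : ℝ) ^ (r + 1))⁻¹) (x : X) :
    seqMul a φ (∑' r, μ r • a r) x = ∑' r, (μ r * (dcoef φ r * φ r x)) • a r := by
  rw [seqMul_eq]
  refine tsum_congr fun r => ?_
  rw [phi_tsum a ha φ hbi hμ r]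
  congr 1
  ring

lemma decay_mul (φ : ℕ → X →L[ℂ] ℂ) (hφ : ∀ r, 1 ≤ ‖φ r‖)
    {μ : ℕ → ℂ} {C : ℝ} (hμ : ∀ r, ‖μ r‖ ≤ C * ((2 : ℝ) ^ (r + 1))⁻¹) (x : X) (r : ℕ) :
    ‖μ r * (dcoef φ r * φ r x)‖ ≤ C * ‖x‖ * ((2 : ℝ) ^ (r + 1))⁻¹ := by
  have h0 : 0 ≤ C * ((2 : ℝ) ^ (r + 1))⁻¹ := le_trans (norm_nonneg _) (hμ r)
  calc ‖μ r * (dcoef φ r * φ r x)‖ = ‖μ r‖ * ‖dcoef φ r * φ r x‖ := norm_mul _ _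
    _ ≤ (C * ((2 : ℝ) ^ (r + 1))⁻¹) * ‖x‖ :=
        mul_le_mul (hμ r) (dcoef_mul_apply_le φ hφ x r) (norm_nonneg _) h0
    _ = C * ‖x‖ * ((2 : ℝ) ^ (r + 1))⁻¹ := by ring

lemma leftProd_tsum (a : ℕ → X) (ha : ∀ r, ‖a r‖ = 1) (φ : ℕ → X →L[ℂ] ℂ)
    (hφ : ∀ r, 1 ≤ ‖φ r‖) (hbi : ∀ r s : ℕ, φ s (a r) = if r = s then 1 else 0) :
    ∀ (ys : List X) (μ : ℕ → ℂ) (C : ℝ), (∀ r, ‖μ r‖ ≤ C * ((2 : ℝ) ^ (r + 1))⁻¹) →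
      leftProd (seqMul a φ) (∑' r, μ r • a r) ys
        = ∑' r, (μ r * ((ys.map fun y => dcoef φ r * φ r y).prod)) • a r
  | [], μ, C, hμ => by simp [leftProd]
  | y :: ys, μ, C, hμ => by
    rw [leftProd, seqMul_tsum a ha φ hbi hμ y,
      leftProd_tsum a ha φ hφ hbi ys _ (C * ‖y‖) (decay_mul φ hφ hμ y)]
    refine tsum_congr fun r => ?_
    rw [List.map_cons, List.prod_cons]
    congr 1
    ring

lemma prod_flatMap' {M : Type*} [CommMonoid M] {α : Type*} (l : List α) (f : α → List M) :
    (l.flatMap f).prod = (l.map fun a => (f a).prod).prod := by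
  induction l with
  | nil => simp
  | cons b l ih => simp [List.flatMap_cons, ih]

end Aux

/-- In the setting of the product
`y × x = Σ_r (2^{−(r+1)}/‖φ_r‖²) φ_r(y)φ_r(x) • a_r` with a biorthogonal system
`φ_s(a_r) = δ_{rs}`, `‖a_r‖ = 1`, `‖φ_r‖ ≥ 1`: for vectors `x_1, …, x_s` with
`φ_r(x_l) = λ_{l,r}` and a multi-index `β` with `|β| ≥ 2`, the product of powers
`x_1^{β_1} × ⋯ × x_s^{β_s}` (formalized as the `×`-product of the list in which each
`x_l` is repeated `β_l` times, factors with `β_l = 0` being absent) equals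
`Σ_r (2^{−(r+1)(|β|−1)}/‖φ_r‖^{2|β|−2}) λ_{1,r}^{β_1} ⋯ λ_{s,r}^{β_s} • a_r`. -/
theorem stmt16 (X : Type*) [NormedAddCommGroup X] [NormedSpace ℂ X] [CompleteSpace X]
    (a : ℕ → X) (ha : ∀ r, ‖a r‖ = 1)
    (φ : ℕ → X →L[ℂ] ℂ) (hφ : ∀ r, 1 ≤ ‖φ r‖)
    (hbi : ∀ r s : ℕ, φ s (a r) = if r = s then 1 else 0)
    (s : ℕ) (x : Fin s → X) (lam : Fin s → ℕ → ℂ)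
    (hlam : ∀ (l : Fin s) (r : ℕ), φ r (x l) = lam l r)
    (β : Fin s → ℕ) (hβ : 2 ≤ ∑ l, β l) :
    listProdNU (seqMul a φ) 0
        ((List.finRange s).flatMap fun l => List.replicate (β l) (x l))
      = ∑' r : ℕ, (((((2 : ℝ) ^ (r + 1)) ^ ((∑ l, β l) - 1))⁻¹ / ‖φ r‖ ^ (2 * (∑ l, β l) - 2)) •
          ((∏ l, lam l r ^ β l) • a r)) := by
  set m := ∑ l, β l with hm
  set L : List X := (List.finRange s).flatMap fun l => List.replicate (β l) (x l) with hL
  have hlen : L.length = m := by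
    rw [hL, List.length_flatMap, hm, Fin.sum_univ_def]
    congr 1
    simp [Function.comp]
  -- the product of the values of φ r over the list L
  have hprodL : ∀ r : ℕ, ((L.map fun y => (φ r) y).prod) = ∏ l, lam l r ^ β l := by
    intro r
    rw [hL, List.map_flatMap, prod_flatMap', Fin.prod_univ_def]
    congr 1
    refine List.map_congr_left fun l _ => ?_
    rw [List.map_replicate, List.prod_replicate, hlam]
  -- destructure L into at least two elements
  have hm2 : 2 ≤ m := hβ
  clear_value m
  have hL2 : 2 ≤ L.length := by rw [hlen]; exact hm2
  obtain ⟨y1, t1, hLd1⟩ : ∃ y h, L = y :: h :=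
    List.exists_cons_of_ne_nil (by intro h; rw [h] at hL2; simp at hL2)
  have ht1 : 1 ≤ t1.length := by rw [hLd1] at hL2; simp at hL2; omega
  obtain ⟨y2, ys, hLd2⟩ : ∃ y h, t1 = y :: h :=
    List.exists_cons_of_ne_nil (by intro h; rw [h] at ht1; simp at ht1)
  have hLd : L = y1 :: y2 :: ys := by rw [hLd1, hLd2]
  have hys_len : ys.length = m - 2 := by
    rw [hLd] at hlen; simp at hlen; omega
  -- the first multiplication
  have hμ0 : ∀ r, ‖dcoef φ r * ((φ r) y1 * (φ r) y2)‖
      ≤ ‖y1‖ * ‖y2‖ * ((2 : ℝ) ^ (r + 1))⁻¹ := by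
    intro r
    have h0 : (0:ℝ) < ‖φ r‖ := lt_of_lt_of_le one_pos (hφ r)
    calc ‖dcoef φ r * ((φ r) y1 * (φ r) y2)‖
        = ‖dcoef φ r‖ * (‖(φ r) y1‖ * ‖(φ r) y2‖) := by rw [norm_mul, norm_mul]
      _ ≤ (((2:ℝ) ^ (r + 1))⁻¹ / ‖φ r‖ ^ 2) * ((‖φ r‖ * ‖y1‖) * (‖φ r‖ * ‖y2‖)) := by
          rw [dcoef_norm]
          gcongr
          exacts [(φ r).le_opNorm y1, (φ r).le_opNorm y2]
      _ = ‖y1‖ * ‖y2‖ * ((2 : ℝ) ^ (r + 1))⁻¹ := by field_simp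
  rw [hLd]
  show leftProd (seqMul a φ) y1 (y2 :: ys) = _
  rw [leftProd, seqMul_eq a φ y1 y2,
    leftProd_tsum a ha φ hφ hbi ys _ (‖y1‖ * ‖y2‖) hμ0]
  refine tsum_congr fun r => ?_
  -- now a pure scalar computation
  have hys_prod : ((ys.map fun y => dcoef φ r * (φ r) y).prod)
      = dcoef φ r ^ (m - 2) * ((ys.map fun y => (φ r) y).prod) := by
    have : (fun y => dcoef φ r * (φ r) y)
        = fun y => (fun _ : X => dcoef φ r) y * (fun y => (φ r) y) y := rfl
    rw [this, List.prod_map_mul, List.map_const', List.prod_replicate, hys_len]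
  have hsc : dcoef φ r * ((φ r) y1 * (φ r) y2) * ((ys.map fun y => dcoef φ r * (φ r) y).prod)
      = dcoef φ r ^ (m - 1) * ∏ l, lam l r ^ β l := by
    rw [hys_prod, ← hprodL r, hLd, List.map_cons, List.map_cons, List.prod_cons,
      List.prod_cons]
    have hme : m - 1 = (m - 2) + 1 := by omega
    rw [hme, pow_succ']
    ring
  rw [hsc]
  -- match with the real-scalar form on the RHS
  have hcast : ((((2 : ℝ) ^ (r + 1)) ^ (m - 1))⁻¹ / ‖φ r‖ ^ (2 * m - 2) : ℝ)
      • ((∏ l, lam l r ^ β l) • a r)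
      = (dcoef φ r ^ (m - 1) * ∏ l, lam l r ^ β l) • a r := by
    have h1 : dcoef φ r ^ (m - 1)
        = (((((2 : ℝ) ^ (r + 1)) ^ (m - 1))⁻¹ / ‖φ r‖ ^ (2 * m - 2) : ℝ) : ℂ) := by
      have he : 2 * m - 2 = 2 * (m - 1) := by omega
      rw [dcoef, ← Complex.ofReal_pow, he]
      congr 1
      rw [div_pow, inv_pow]
      congr 1
      exact (pow_mul _ 2 (m - 1)).symm
    rw [h1, mul_smul, Complex.coe_smul]
  rw [hcast]
end
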